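/- Let g ≥ 3 and let Ω be the alternating form of the permutation τ^{(g)}. If β is an integer with 3 ≤ β ≤ 3g−3 and β ≡ 3 (mod 6), then the vector (−e_2 + e_3) + (−e_5 + e_6) + ⋯ + (−e_{β−1} + e_β) (i.e. Σ_{k : 3k+3 ≤ β} (−e_{3k+2} + e_{3k+3})) belongs to the Ω-closure {e_α : α ∈ A}^Ω of the standard basis. -/

import Mathlib

open Matrix

def Aset (g : ℕ) : Finset ℕ :=
  {0, 1} ∪ (Finset.range (g - 1)).biUnion (fun k => {3 * k + 2, 3 * k + 3})

abbrev Idx (g : ℕ) := ↥(Aset g)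

def evec (g : ℕ) (m : ℕ) : Idx g → ℤ := fun a => if (a : ℕ) = m then 1 else 0

def pbtau (g : ℕ) (n : ℕ) : ℕ :=
  if n = 0 then 2 * g
  else if n = 1 then 2 * g - 1
  else if n % 3 = 0 then 2 * (n / 3) - 1
  else 2 * ((n - 2) / 3) + 2

def Om (g : ℕ) (pb : ℕ → ℕ) : Matrix (Idx g) (Idx g) ℤ := fun a b =>
  if (a : ℕ) < (b : ℕ) ∧ pb (b : ℕ) < pb (a : ℕ) then 1
  else if (b : ℕ) < (a : ℕ) ∧ pb (a : ℕ) < pb (b : ℕ) then -1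
  else 0

lemma Om_skew (g : ℕ) (pb : ℕ → ℕ) : (Om g pb)ᵀ = -(Om g pb) := by
  ext a b
  simp only [Matrix.transpose_apply, Matrix.neg_apply, Om]
  split_ifs <;> omega

def pairing {g : ℕ} (Ω : Matrix (Idx g) (Idx g) ℤ) (u v : Idx g → ℤ) : ℤ :=
  u ⬝ᵥ Ω.mulVec v

lemma pairing_add {g : ℕ} (Ω : Matrix (Idx g) (Idx g) ℤ) (v u w : Idx g → ℤ) :
    pairing Ω v (u + w) = pairing Ω v u + pairing Ω v w := by
  unfold pairing; rw [Matrix.mulVec_add, dotProduct_add]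

lemma pairing_sub {g : ℕ} (Ω : Matrix (Idx g) (Idx g) ℤ) (v u w : Idx g → ℤ) :
    pairing Ω v (u - w) = pairing Ω v u - pairing Ω v w := by
  unfold pairing; rw [Matrix.mulVec_sub, dotProduct_sub]

lemma pairing_smul {g : ℕ} (Ω : Matrix (Idx g) (Idx g) ℤ) (v : Idx g → ℤ) (c : ℤ)
    (u : Idx g → ℤ) : pairing Ω v (c • u) = c * pairing Ω v u := by
  unfold pairing; rw [Matrix.mulVec_smul, dotProduct_smul, smul_eq_mul]

lemma pairing_self_zero {g : ℕ} (Ω : Matrix (Idx g) (Idx g) ℤ) (hΩ : Ωᵀ = -Ω)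
    (v : Idx g → ℤ) : pairing Ω v v = 0 := by
  have key : pairing Ω v v = -pairing Ω v v := by
    calc pairing Ω v v = ∑ a, ∑ b, v a * (Ω a b * v b) := by
          simp [pairing, dotProduct, Matrix.mulVec, Finset.mul_sum]
    _ = ∑ a, ∑ b, -(v b * (Ω b a * v a)) := by
          refine Finset.sum_congr rfl fun a _ => Finset.sum_congr rfl fun b _ => ?_
          have h : Ω a b = -Ω b a := by
            have := congrFun (congrFun hΩ.symm a) b
            simp only [Matrix.transpose_apply, Matrix.neg_apply] at this
            omega
          rw [h]; ring
    _ = -∑ b, ∑ a, v b * (Ω b a * v a) := by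
          rw [Finset.sum_comm]
          simp
    _ = -pairing Ω v v := by
          simp [pairing, dotProduct, Matrix.mulVec, Finset.mul_sum]
  omega

def transvection {g : ℕ} (Ω : Matrix (Idx g) (Idx g) ℤ) (hΩ : Ωᵀ = -Ω) (v : Idx g → ℤ) :
    (Idx g → ℤ) ≃ₗ[ℤ] (Idx g → ℤ) where
  toFun u := u + pairing Ω v u • v
  invFun u := u - pairing Ω v u • v
  map_add' u w := by
    show (u + w) + pairing Ω v (u + w) • v = (u + pairing Ω v u • v) + (w + pairing Ω v w • v)
    rw [pairing_add, add_smul]; abel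
  map_smul' c u := by
    show c • u + pairing Ω v (c • u) • v = c • (u + pairing Ω v u • v)
    rw [pairing_smul, mul_smul, smul_add]
  left_inv u := by
    show (u + pairing Ω v u • v) - pairing Ω v (u + pairing Ω v u • v) • v = u
    rw [pairing_add, pairing_smul, pairing_self_zero Ω hΩ, mul_zero, add_zero,
      add_sub_cancel_right]
  right_inv u := by
    show (u - pairing Ω v u • v) + pairing Ω v (u - pairing Ω v u • v) • v = u
    rw [pairing_sub, pairing_smul, pairing_self_zero Ω hΩ, mul_zero, sub_zero,
      sub_add_cancel]

inductive OmegaClosure {M : Type*} [AddCommGroup M] (pair : M → M → ℤ) (V : Set M) : M → Prop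
  | base {v : M} : v ∈ V → OmegaClosure pair V v
  | neg {v : M} : OmegaClosure pair V v → OmegaClosure pair V (-v)
  | add {v w : M} : OmegaClosure pair V v → OmegaClosure pair V w → pair v w = 1 →
      OmegaClosure pair V (v + w)
  | sub {v w : M} : OmegaClosure pair V v → OmegaClosure pair V w → pair v w = 1 →
      OmegaClosure pair V (v - w)

/-- The alternating form of Zorich's permutation `τ^{(g)}`
(top row `0 1 2 3 5 6 … 3g-4 3g-3`, bottom row `3 2 6 5 9 8 … 3g-3 3g-4 1 0`). -/
def OmTau (g : ℕ) : Matrix (Idx g) (Idx g) ℤ := Om g (pbtau g)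

lemma OmTau_skew (g : ℕ) : (OmTau g)ᵀ = -(OmTau g) := Om_skew g (pbtau g)

/-- `v* = e_0 + Σ_{k=0}^{g-2} (-e_{3k+2} + e_{3k+3})`. -/
def vstar (g : ℕ) : Idx g → ℤ :=
  evec g 0 + ∑ k ∈ Finset.range (g - 1), (-evec g (3 * k + 2) + evec g (3 * k + 3))

/-- `w* = e_1 + Σ_{k=0}^{g-2} (-e_{3k+2} + e_{3k+3})`. -/
def wstar (g : ℕ) : Idx g → ℤ :=
  evec g 1 + ∑ k ∈ Finset.range (g - 1), (-evec g (3 * k + 2) + evec g (3 * k + 3))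

namespace Statement8Aux

/-! ### Membership lemmas -/

lemma mem0 (g : ℕ) : 0 ∈ Aset g := by simp [Aset]

lemma mem1 (g : ℕ) : 1 ∈ Aset g := by simp [Aset]

lemma memp (g : ℕ) {k : ℕ} (hk : k < g - 1) : 3 * k + 2 ∈ Aset g := by
  simp only [Aset, Finset.mem_union, Finset.mem_biUnion, Finset.mem_range,
    Finset.mem_insert, Finset.mem_singleton]
  exact Or.inr ⟨k, hk, Or.inl rfl⟩

lemma memq (g : ℕ) {k : ℕ} (hk : k < g - 1) : 3 * k + 3 ∈ Aset g := by
  simp only [Aset, Finset.mem_union, Finset.mem_biUnion, Finset.mem_range,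
    Finset.mem_insert, Finset.mem_singleton]
  exact Or.inr ⟨k, hk, Or.inr rfl⟩

/-! ### pbtau values -/

lemma pb0 (g : ℕ) : pbtau g 0 = 2 * g := by simp [pbtau]

lemma pb1 (g : ℕ) : pbtau g 1 = 2 * g - 1 := by simp [pbtau]

lemma pbp (g k : ℕ) : pbtau g (3 * k + 2) = 2 * k + 2 := by
  unfold pbtau
  rw [if_neg (by omega), if_neg (by omega), if_neg (by omega)]
  omega

lemma pbq (g k : ℕ) : pbtau g (3 * k + 3) = 2 * k + 1 := by
  unfold pbtau
  rw [if_neg (by omega), if_neg (by omega), if_pos (by omega)]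
  omega

/-! ### pairing linearity (left) and antisymmetry -/

lemma pairing_add_left {g : ℕ} (Ω : Matrix (Idx g) (Idx g) ℤ) (u w v : Idx g → ℤ) :
    pairing Ω (u + w) v = pairing Ω u v + pairing Ω w v := by
  unfold pairing; rw [add_dotProduct]

lemma pairing_neg_left {g : ℕ} (Ω : Matrix (Idx g) (Idx g) ℤ) (u v : Idx g → ℤ) :
    pairing Ω (-u) v = -pairing Ω u v := by
  unfold pairing; rw [neg_dotProduct]

lemma pairing_sub_left {g : ℕ} (Ω : Matrix (Idx g) (Idx g) ℤ) (u w v : Idx g → ℤ) :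
    pairing Ω (u - w) v = pairing Ω u v - pairing Ω w v := by
  unfold pairing; rw [sub_dotProduct]

lemma pairing_zero_left {g : ℕ} (Ω : Matrix (Idx g) (Idx g) ℤ) (v : Idx g → ℤ) :
    pairing Ω 0 v = 0 := by
  unfold pairing; rw [zero_dotProduct]

lemma pairing_sum_left {g : ℕ} (Ω : Matrix (Idx g) (Idx g) ℤ) {ι : Type*}
    (s : Finset ι) (f : ι → Idx g → ℤ) (v : Idx g → ℤ) :
    pairing Ω (∑ k ∈ s, f k) v = ∑ k ∈ s, pairing Ω (f k) v := by
  classical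
  induction s using Finset.cons_induction with
  | empty => simp [pairing_zero_left]
  | cons a s ha ih =>
      rw [Finset.sum_cons, Finset.sum_cons, pairing_add_left, ih]

lemma pairing_anti {g : ℕ} (Ω : Matrix (Idx g) (Idx g) ℤ) (hΩ : Ωᵀ = -Ω)
    (u w : Idx g → ℤ) : pairing Ω u w = -pairing Ω w u := by
  calc pairing Ω u w = ∑ a, ∑ b, u a * (Ω a b * w b) := by
        simp [pairing, dotProduct, Matrix.mulVec, Finset.mul_sum]
  _ = ∑ a, ∑ b, -(w b * (Ω b a * u a)) := by
        refine Finset.sum_congr rfl fun a _ => Finset.sum_congr rfl fun b _ => ?_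
        have h : Ω a b = -Ω b a := by
          have := congrFun (congrFun hΩ.symm a) b
          simp only [Matrix.transpose_apply, Matrix.neg_apply] at this
          omega
        rw [h]; ring
  _ = -∑ b, ∑ a, w b * (Ω b a * u a) := by rw [Finset.sum_comm]; simp
  _ = -pairing Ω w u := by
        simp [pairing, dotProduct, Matrix.mulVec, Finset.mul_sum]

/-! ### pairing of basis vectors -/

lemma evec_eq_single {g : ℕ} {a : ℕ} (ha : a ∈ Aset g) :
    evec g a = Pi.single (⟨a, ha⟩ : Idx g) (1 : ℤ) := by
  funext x
  simp [evec, Pi.single_apply, Subtype.ext_iff]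

lemma pee {g : ℕ} {a b : ℕ} (ha : a ∈ Aset g) (hb : b ∈ Aset g) :
    pairing (OmTau g) (evec g a) (evec g b) = OmTau g ⟨a, ha⟩ ⟨b, hb⟩ := by
  rw [evec_eq_single ha, evec_eq_single hb]
  unfold pairing
  rw [Matrix.mulVec_single, single_dotProduct]
  simp

lemma OmTau_val {g : ℕ} {a b : ℕ} (ha : a ∈ Aset g) (hb : b ∈ Aset g) :
    OmTau g ⟨a, ha⟩ ⟨b, hb⟩ =
      if a < b ∧ pbtau g b < pbtau g a then 1
      else if b < a ∧ pbtau g a < pbtau g b then -1 else 0 := rfl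

end Statement8Aux
namespace Statement8Aux

section Values
variable {g : ℕ}

lemma pe01 (hg : 1 ≤ g) :
    pairing (OmTau g) (evec g 0) (evec g 1) = 1 := by
  rw [pee (mem0 g) (mem1 g), OmTau_val, pb0, pb1, if_pos ⟨by omega, by omega⟩]

lemma pe0p {k : ℕ} (hk : k < g - 1) :
    pairing (OmTau g) (evec g 0) (evec g (3 * k + 2)) = 1 := by
  rw [pee (mem0 g) (memp g hk), OmTau_val, pb0, pbp, if_pos ⟨by omega, by omega⟩]

lemma pe0q {k : ℕ} (hk : k < g - 1) :
    pairing (OmTau g) (evec g 0) (evec g (3 * k + 3)) = 1 := by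
  rw [pee (mem0 g) (memq g hk), OmTau_val, pb0, pbq, if_pos ⟨by omega, by omega⟩]

lemma pe1p {k : ℕ} (hk : k < g - 1) :
    pairing (OmTau g) (evec g 1) (evec g (3 * k + 2)) = 1 := by
  rw [pee (mem1 g) (memp g hk), OmTau_val, pb1, pbp, if_pos ⟨by omega, by omega⟩]

lemma pe1q {k : ℕ} (hk : k < g - 1) :
    pairing (OmTau g) (evec g 1) (evec g (3 * k + 3)) = 1 := by
  rw [pee (mem1 g) (memq g hk), OmTau_val, pb1, pbq, if_pos ⟨by omega, by omega⟩]

lemma pe_pp {k l : ℕ} (hk : k < g - 1) (hl : l < g - 1) :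
    pairing (OmTau g) (evec g (3 * k + 2)) (evec g (3 * l + 2)) = 0 := by
  rw [pee (memp g hk) (memp g hl), OmTau_val, pbp, pbp,
    if_neg (by omega), if_neg (by omega)]

lemma pe_qq {k l : ℕ} (hk : k < g - 1) (hl : l < g - 1) :
    pairing (OmTau g) (evec g (3 * k + 3)) (evec g (3 * l + 3)) = 0 := by
  rw [pee (memq g hk) (memq g hl), OmTau_val, pbq, pbq,
    if_neg (by omega), if_neg (by omega)]

lemma pe_pq_eq {k : ℕ} (hk : k < g - 1) :
    pairing (OmTau g) (evec g (3 * k + 2)) (evec g (3 * k + 3)) = 1 := by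
  rw [pee (memp g hk) (memq g hk), OmTau_val, pbp, pbq, if_pos ⟨by omega, by omega⟩]

lemma pe_pq_ne {k l : ℕ} (hk : k < g - 1) (hl : l < g - 1) (hne : k ≠ l) :
    pairing (OmTau g) (evec g (3 * k + 2)) (evec g (3 * l + 3)) = 0 := by
  rw [pee (memp g hk) (memq g hl), OmTau_val, pbp, pbq,
    if_neg (by omega), if_neg (by omega)]

lemma pe_qp_eq {k : ℕ} (hk : k < g - 1) :
    pairing (OmTau g) (evec g (3 * k + 3)) (evec g (3 * k + 2)) = -1 := by
  rw [pairing_anti _ (OmTau_skew g), pe_pq_eq hk]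

lemma pe_qp_ne {k l : ℕ} (hk : k < g - 1) (hl : l < g - 1) (hne : k ≠ l) :
    pairing (OmTau g) (evec g (3 * k + 3)) (evec g (3 * l + 2)) = 0 := by
  rw [pairing_anti _ (OmTau_skew g), pe_pq_ne hl hk (Ne.symm hne)]; rfl

lemma pep0 {k : ℕ} (hk : k < g - 1) :
    pairing (OmTau g) (evec g (3 * k + 2)) (evec g 0) = -1 := by
  rw [pairing_anti _ (OmTau_skew g), pe0p hk]

lemma peq0 {k : ℕ} (hk : k < g - 1) :
    pairing (OmTau g) (evec g (3 * k + 3)) (evec g 0) = -1 := by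
  rw [pairing_anti _ (OmTau_skew g), pe0q hk]

lemma pep1 {k : ℕ} (hk : k < g - 1) :
    pairing (OmTau g) (evec g (3 * k + 2)) (evec g 1) = -1 := by
  rw [pairing_anti _ (OmTau_skew g), pe1p hk]

lemma peq1 {k : ℕ} (hk : k < g - 1) :
    pairing (OmTau g) (evec g (3 * k + 3)) (evec g 1) = -1 := by
  rw [pairing_anti _ (OmTau_skew g), pe1q hk]

end Values

/-! ### the vectors `U k = -e_{3k+2} + e_{3k+3}` -/

def U (g k : ℕ) : Idx g → ℤ := -evec g (3 * k + 2) + evec g (3 * k + 3)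

section Uval
variable {g : ℕ}

lemma pU0 {k : ℕ} (hk : k < g - 1) :
    pairing (OmTau g) (U g k) (evec g 0) = 0 := by
  rw [U, pairing_add_left, pairing_neg_left, pep0 hk, peq0 hk]; ring

lemma pU1 {k : ℕ} (hk : k < g - 1) :
    pairing (OmTau g) (U g k) (evec g 1) = 0 := by
  rw [U, pairing_add_left, pairing_neg_left, pep1 hk, peq1 hk]; ring

lemma pUp {k l : ℕ} (hk : k < g - 1) (hl : l < g - 1) (hne : k ≠ l) :
    pairing (OmTau g) (U g k) (evec g (3 * l + 2)) = 0 := by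
  rw [U, pairing_add_left, pairing_neg_left, pe_pp hk hl, pe_qp_ne hk hl hne]; ring

lemma pUq {k l : ℕ} (hk : k < g - 1) (hl : l < g - 1) (hne : k ≠ l) :
    pairing (OmTau g) (U g k) (evec g (3 * l + 3)) = 0 := by
  rw [U, pairing_add_left, pairing_neg_left, pe_pq_ne hk hl hne, pe_qq hk hl]; ring

lemma pSum0 {m : ℕ} (hm : m ≤ g - 1) :
    pairing (OmTau g) (∑ k ∈ Finset.range m, U g k) (evec g 0) = 0 := by
  rw [pairing_sum_left]
  exact Finset.sum_eq_zero fun k hk => pU0 (by simp at hk; omega)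

lemma pSum1 {m : ℕ} (hm : m ≤ g - 1) :
    pairing (OmTau g) (∑ k ∈ Finset.range m, U g k) (evec g 1) = 0 := by
  rw [pairing_sum_left]
  exact Finset.sum_eq_zero fun k hk => pU1 (by simp at hk; omega)

lemma pSump {m l : ℕ} (hm : m ≤ l) (hl : l < g - 1) :
    pairing (OmTau g) (∑ k ∈ Finset.range m, U g k) (evec g (3 * l + 2)) = 0 := by
  rw [pairing_sum_left]
  refine Finset.sum_eq_zero fun k hk => ?_
  simp only [Finset.mem_range] at hk
  exact pUp (by omega) hl (by omega)

lemma pSumq {m l : ℕ} (hm : m ≤ l) (hl : l < g - 1) :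
    pairing (OmTau g) (∑ k ∈ Finset.range m, U g k) (evec g (3 * l + 3)) = 0 := by
  rw [pairing_sum_left]
  refine Finset.sum_eq_zero fun k hk => ?_
  simp only [Finset.mem_range] at hk
  exact pUq (by omega) hl (by omega)

end Uval

/-! ### closure -/

abbrev OC (g : ℕ) : (Idx g → ℤ) → Prop :=
  OmegaClosure (pairing (OmTau g)) (Set.range fun a : Idx g => evec g (a : ℕ))

lemma oc_evec {g : ℕ} {m : ℕ} (hm : m ∈ Aset g) : OC g (evec g m) :=
  OmegaClosure.base ⟨⟨m, hm⟩, rfl⟩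

lemma oc_congr {g : ℕ} {x y : Idx g → ℤ} (h : OC g x) (e : x = y) : OC g y := e ▸ h

end Statement8Aux
namespace Statement8Aux

lemma Vstep (g : ℕ) (hg : 3 ≤ g) :
    ∀ j, 2 * j ≤ g - 2 → OC g (evec g 0 + ∑ k ∈ Finset.range (2 * j), U g k) := by
  intro j
  induction j with
  | zero => intro _; simpa using oc_evec (mem0 g)
  | succ j ih =>
    intro hj
    have hp : 2 * j < g - 1 := by omega
    have hq : 2 * j + 1 < g - 1 := by omega
    have hne : 2 * j ≠ 2 * j + 1 := by omega
    have c0 := ih (by omega)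
    set S := ∑ k ∈ Finset.range (2 * j), U g k with hS
    -- step 1 : subtract e_{3p+2}
    have h1 : pairing (OmTau g) (evec g 0 + S) (evec g (3 * (2 * j) + 2)) = 1 := by
      rw [pairing_add_left, pe0p hp, pSump (le_refl _) hp]; ring
    have c1 := c0.sub (oc_evec (memp g hp)) h1
    -- step 2 : add e_{3q+3}
    have h2 : pairing (OmTau g) (evec g 0 + S - evec g (3 * (2 * j) + 2))
        (evec g (3 * (2 * j + 1) + 3)) = 1 := by
      rw [pairing_sub_left, pairing_add_left, pe0q hq, pSumq (by omega) hq,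
        pe_pq_ne hp hq hne]
      ring
    have c2 := c1.add (oc_evec (memq g hq)) h2
    -- step 3 : add e_1
    have h3 : pairing (OmTau g)
        (evec g 0 + S - evec g (3 * (2 * j) + 2) + evec g (3 * (2 * j + 1) + 3))
        (evec g 1) = 1 := by
      rw [pairing_add_left, pairing_sub_left, pairing_add_left, pe01 (by omega),
        pSum1 (by omega), pep1 hp, peq1 hq]
      ring
    have c3 := c2.add (oc_evec (mem1 g)) h3
    -- step 4 : add e_{3p+3}
    have h4 : pairing (OmTau g)
        (evec g 0 + S - evec g (3 * (2 * j) + 2) + evec g (3 * (2 * j + 1) + 3)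
          + evec g 1) (evec g (3 * (2 * j) + 3)) = 1 := by
      rw [pairing_add_left, pairing_add_left, pairing_sub_left, pairing_add_left,
        pe0q hp, pSumq (le_refl _) hp, pe_pq_eq hp, pe_qq hq hp, pe1q hp]
      ring
    have c4 := c3.add (oc_evec (memq g hp)) h4
    -- step 5 : subtract e_{3q+2}
    have h5 : pairing (OmTau g)
        (evec g 0 + S - evec g (3 * (2 * j) + 2) + evec g (3 * (2 * j + 1) + 3)
          + evec g 1 + evec g (3 * (2 * j) + 3)) (evec g (3 * (2 * j + 1) + 2)) = 1 := by
      rw [pairing_add_left, pairing_add_left, pairing_add_left, pairing_sub_left,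
        pairing_add_left, pe0p hq, pSump (by omega) hq, pe_pp hp hq, pe_qp_eq hq,
        pe1p hq, pe_qp_ne hp hq hne]
      ring
    have c5 := c4.sub (oc_evec (memp g hq)) h5
    -- step 6 : subtract e_1
    have h6 : pairing (OmTau g)
        (evec g 0 + S - evec g (3 * (2 * j) + 2) + evec g (3 * (2 * j + 1) + 3)
          + evec g 1 + evec g (3 * (2 * j) + 3) - evec g (3 * (2 * j + 1) + 2))
        (evec g 1) = 1 := by
      rw [pairing_sub_left, pairing_add_left, pairing_add_left, pairing_add_left,
        pairing_sub_left, pairing_add_left, pe01 (by omega), pSum1 (by omega),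
        pep1 hp, peq1 hq, pairing_self_zero _ (OmTau_skew g), peq1 hp, pep1 hq]
      ring
    have c6 := c5.sub (oc_evec (mem1 g)) h6
    refine oc_congr c6 ?_
    have h2j : 2 * (j + 1) = 2 * j + 1 + 1 := by ring
    rw [h2j, Finset.sum_range_succ, Finset.sum_range_succ, ← hS]
    unfold U
    abel

end Statement8Aux

open Statement8Aux in
/-- Lemma 3.2 of the paper: if `β ≡ 3 (mod 6)` and `3 ≤ β ≤ 3g-3`, then
`(-e_2 + e_3) + (-e_5 + e_6) + ⋯ + (-e_{β-1} + e_β)` belongs to the Ω-closure of the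
standard basis, for the form of `τ^{(g)}`, `g ≥ 3`. -/
theorem statement8 (g : ℕ) (hg : 3 ≤ g) (β : ℕ) (hβ3 : 3 ≤ β) (hβ : β ≤ 3 * g - 3)
    (hmod : β % 6 = 3) :
    OmegaClosure (pairing (OmTau g)) (Set.range fun a : Idx g => evec g (a : ℕ))
      (∑ k ∈ (Finset.range (g - 1)).filter (fun k => 3 * k + 3 ≤ β),
        (-evec g (3 * k + 2) + evec g (3 * k + 3))) := by
  obtain ⟨j, hjβ⟩ : ∃ j, β = 6 * j + 3 := ⟨β / 6, by omega⟩
  have hfilter : (Finset.range (g - 1)).filter (fun k => 3 * k + 3 ≤ β)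
      = Finset.range (2 * j + 1) := by
    ext a
    simp only [Finset.mem_filter, Finset.mem_range]
    omega
  rw [hfilter]
  have hsumU : ∑ k ∈ Finset.range (2 * j + 1), (-evec g (3 * k + 2) + evec g (3 * k + 3))
      = ∑ k ∈ Finset.range (2 * j + 1), U g k := rfl
  rw [hsumU]
  have hn : 2 * j < g - 1 := by omega
  have cV := Vstep g hg j (by omega)
  set S := ∑ k ∈ Finset.range (2 * j), U g k with hS
  -- add e_{3n+3}
  have hA : pairing (OmTau g) (evec g 0 + S) (evec g (3 * (2 * j) + 3)) = 1 := by
    rw [pairing_add_left, pe0q hn, pSumq (le_refl _) hn]; ring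
  have cA := cV.add (oc_evec (memq g hn)) hA
  -- subtract from e_0 and negate
  have hB : pairing (OmTau g) (evec g 0)
      (evec g 0 + S + evec g (3 * (2 * j) + 3)) = 1 := by
    rw [pairing_anti _ (OmTau_skew g), pairing_add_left, pairing_add_left,
      pairing_self_zero _ (OmTau_skew g), pSum0 (by omega), peq0 hn]
    ring
  have cB := ((oc_evec (mem0 g)).sub cA hB).neg
  have cW : OC g (S + evec g (3 * (2 * j) + 3)) := oc_congr cB (by abel)
  -- subtract from e_{3n+2} and negate
  have hC : pairing (OmTau g) (evec g (3 * (2 * j) + 2))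
      (S + evec g (3 * (2 * j) + 3)) = 1 := by
    rw [pairing_anti _ (OmTau_skew g), pairing_add_left, pSump (le_refl _) hn,
      pe_qp_eq hn]
    ring
  have cC := ((oc_evec (memp g hn)).sub cW hC).neg
  refine oc_congr cC ?_
  rw [Finset.sum_range_succ, ← hS]
  unfold U
  abel
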